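/- The linear map Q : ℙ^d → ℙ^{d-2} defined by Q(p) = 𝒯_{d-2}(Δp + (ω²/c²) p) is surjective, hence dim ker Q = dim ℙ^d - dim ℙ^{d-2} = (d+1)(d+2)/2 - (d-1)d/2 = 2d+1. -/

import Mathlib

open MvPolynomial Complex

/-- Partial derivative in direction `i` of a function on `ℝ × ℝ`. -/
noncomputable def pd (i : Fin 2) (f : ℝ × ℝ → ℂ) : ℝ × ℝ → ℂ :=
  fun x => fderiv ℝ f x (if i = 0 then ((1 : ℝ), (0 : ℝ)) else ((0 : ℝ), (1 : ℝ)))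

/-- `taylorZero q f x₀` : the Taylor truncation of order `q` of `f` at `x₀` vanishes. -/
noncomputable def taylorZero (q : ℕ) (f : ℝ × ℝ → ℂ) (x₀ : ℝ × ℝ) : Prop :=
  ∀ a b : ℕ, a + b ≤ q → (pd 0)^[a] ((pd 1)^[b] f) x₀ = 0

/-- Evaluation of a two-variable complex polynomial at a real point. -/
noncomputable def pev (p : MvPolynomial (Fin 2) ℂ) (x : ℝ × ℝ) : ℂ :=
  MvPolynomial.eval ![(x.1 : ℂ), (x.2 : ℂ)] p

/-!
Write `∂^{a,b} f` for `∂ₓ^a ∂ᵧ^b f (x₀)` and `g = ω²/c²`, which is `C^{d-2}` near `x₀`.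
For a polynomial `p`, the `(a, b)` coefficient of `Q p` is
`∂^{a+2,b} p + ∂^{a,b+2} p + ∂^{a,b} (g p)`, and by the product rule the last term vanishes
as soon as all derivatives of `p` of order `≤ a + b` vanish at `x₀`. Ordering the derivatives of
`p` by total order and then by `x`-order, the equations thus determine every `∂^{m,n} p` with
`m ≥ 2` from the Cauchy data `∂^{0,n} p` (`n ≤ d`) and `∂^{1,n} p` (`n < d`). As a polynomial of
degree `≤ d` is determined by its derivatives of order `≤ d` at `x₀`, the map
`p ↦ (Q p, Cauchy data of p)` is injective on `ℙ^d`; counting monomials shows that its target is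
not larger than `ℙ^d`, so it is bijective. Hence `Q` is onto, and the preimages of the standard
basis of Cauchy data span `ker Q`.
-/

open Filter Topology

local notation "ℙ" => MvPolynomial (Fin 2) ℂ

section PolynomialCalculus

theorem pev_add (p q : ℙ) : pev (p + q) = pev p + pev q := by
  ext x; simp [pev]

theorem pev_smul (c : ℂ) (p : ℙ) : pev (c • p) = c • pev p := by
  ext x; simp [pev, smul_eq_C_mul]

theorem pev_mul_X (p : ℙ) (i : Fin 2) :
    pev (p * X i) = pev p * fun x => ![(x.1 : ℂ), x.2] i := by
  ext x; simp [pev]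

theorem hasFDerivAt_pev (p : ℙ) (x : ℝ × ℝ) :
    HasFDerivAt (pev p) (pev (pderiv 0 p) x • (ofRealCLM ∘L .fst ℝ ℝ ℝ)
      + pev (pderiv 1 p) x • (ofRealCLM ∘L .snd ℝ ℝ ℝ)) x := by
  induction p using MvPolynomial.induction_on generalizing x with
  | C a =>
    have h : pev (C a) = fun _ => a := by ext; simp [pev]
    rw [h]
    refine (hasFDerivAt_const a x).congr_fderiv ?_
    ext <;> simp [pev]
  | add p q hp hq =>
    rw [pev_add]
    refine ((hp x).add (hq x)).congr_fderiv ?_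
    ext <;> simp [pev_add]
  | mul_X p i hp =>
    rw [pev_mul_X]
    fin_cases i
    · refine ((hp x).mul (ofRealCLM ∘L .fst ℝ ℝ ℝ).hasFDerivAt).congr_fderiv ?_
      ext <;> simp [pev, pderiv_X]
    · refine ((hp x).mul (ofRealCLM ∘L .snd ℝ ℝ ℝ).hasFDerivAt).congr_fderiv ?_
      ext <;> simp [pev, pderiv_X]

theorem pd_pev (i : Fin 2) (p : ℙ) : pd i (pev p) = pev (pderiv i p) := by
  ext x
  fin_cases i <;> simp [pd, (hasFDerivAt_pev p x).fderiv]

theorem iterate_pd_pev (i : Fin 2) (n : ℕ) (p : ℙ) :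
    (pd i)^[n] (pev p) = pev ((pderiv i)^[n] p) := by
  induction n generalizing p with
  | zero => rfl
  | succ n ih => rw [Function.iterate_succ_apply, Function.iterate_succ_apply, pd_pev, ih]

theorem contDiff_pev {n : WithTop ℕ∞} (p : ℙ) : ContDiff ℝ n (pev p) := by
  have e : pev p = fun x => eval (fun i => ![ofRealCLM ∘L .fst ℝ ℝ ℝ,
      ofRealCLM ∘L .snd ℝ ℝ ℝ] i x) p :=
    funext fun x => congrArg (eval · p) (funext fun i => by fin_cases i <;> rfl)
  rw [e]
  exact (AnalyticOnNhd.eval_continuousLinearMap' _ p).contDiff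

end PolynomialCalculus

section PartialDerivatives

variable {f g : ℝ × ℝ → ℂ} {x : ℝ × ℝ}

theorem Filter.EventuallyEq.pd (h : f =ᶠ[𝓝 x] g) (i : Fin 2) :
    _root_.pd i f =ᶠ[𝓝 x] _root_.pd i g :=
  (h.fderiv (𝕜 := ℝ)).mono fun y hy => by simp only [_root_.pd, hy]

theorem Filter.EventuallyEq.iterate_pd (h : f =ᶠ[𝓝 x] g) (i : Fin 2) (n : ℕ) :
    (_root_.pd i)^[n] f =ᶠ[𝓝 x] (_root_.pd i)^[n] g := by
  induction n generalizing f g with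
  | zero => exact h
  | succ n ih => exact ih (h.pd i)

theorem ContDiffAt.pd {n : ℕ} (hf : ContDiffAt ℝ (n + 1) f x) (i : Fin 2) :
    ContDiffAt ℝ n (_root_.pd i f) x :=
  (hf.fderiv_right le_rfl).clm_apply contDiffAt_const

theorem ContDiffAt.iterate_pd {k n : ℕ} (hf : ContDiffAt ℝ (k + n : ℕ) f x) (i : Fin 2) :
    ContDiffAt ℝ n ((_root_.pd i)^[k] f) x := by
  induction k generalizing f with
  | zero => simpa using hf
  | succ k ih => exact ih (ContDiffAt.pd (hf.of_le (by norm_cast; omega)) i)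

theorem ContDiffAt.eventually_differentiableAt {n : ℕ} (hf : ContDiffAt ℝ (n + 1) f x) :
    ∀ᶠ y in 𝓝 x, DifferentiableAt ℝ f y :=
  (hf.eventually (by simp)).mono fun _ hy => hy.differentiableAt (by simp)

theorem pd_add_eventuallyEq {n : ℕ} (hf : ContDiffAt ℝ (n + 1) f x)
    (hg : ContDiffAt ℝ (n + 1) g x) (i : Fin 2) : pd i (f + g) =ᶠ[𝓝 x] pd i f + pd i g :=
  hf.eventually_differentiableAt.and hg.eventually_differentiableAt |>.mono
    fun y ⟨hfy, hgy⟩ => by simp [_root_.pd, fderiv_add hfy hgy]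

theorem iterate_pd_add_eventuallyEq {n : ℕ} (hf : ContDiffAt ℝ n f x)
    (hg : ContDiffAt ℝ n g x) (i : Fin 2) :
    (pd i)^[n] (f + g) =ᶠ[𝓝 x] (pd i)^[n] f + (pd i)^[n] g := by
  induction n generalizing f g with
  | zero => rfl
  | succ n ih =>
    exact (Filter.EventuallyEq.iterate_pd (pd_add_eventuallyEq hf hg i) i n).trans
      (ih (hf.pd i) (hg.pd i))

theorem pd_const_smul (c : ℂ) (f : ℝ × ℝ → ℂ) (i : Fin 2) : pd i (c • f) = c • pd i f := by
  ext y; simp [pd, fderiv_const_smul_field]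

theorem iterate_pd_const_smul (c : ℂ) (f : ℝ × ℝ → ℂ) (i : Fin 2) (n : ℕ) :
    (pd i)^[n] (c • f) = c • (pd i)^[n] f := by
  induction n generalizing f with
  | zero => rfl
  | succ n ih => rw [Function.iterate_succ_apply, Function.iterate_succ_apply, pd_const_smul, ih]

theorem pd_mul_pev_eventuallyEq {n : ℕ} (hg : ContDiffAt ℝ (n + 1) g x) (p : ℙ) (i : Fin 2) :
    pd i (g * pev p) =ᶠ[𝓝 x] pd i g * pev p + g * pev (pderiv i p) :=
  hg.eventually_differentiableAt.mono fun y hy => by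
    have h := fderiv_mul hy ((contDiff_pev p (n := 1)).differentiable one_ne_zero y)
    rw [← pd_pev]
    simp only [_root_.pd, h, add_apply, smul_apply,
      smul_eq_mul, Pi.add_apply, Pi.mul_apply]
    ring

end PartialDerivatives

section PDeriv

variable {σ R : Type*}

theorem MvPolynomial.pderiv_pderiv_comm [CommSemiring R] (i j : σ) (p : MvPolynomial σ R) :
    pderiv i (pderiv j p) = pderiv j (pderiv i p) := by
  classical
  induction p using MvPolynomial.induction_on with
  | C a => simp
  | add p q hp hq => simp [hp, hq]
  | mul_X p k hp =>
    simp only [pderiv_mul, map_add, pderiv_X, hp, Pi.single_apply, apply_ite (pderiv _),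
      pderiv_one, map_zero, ite_self]
    ring

theorem MvPolynomial.totalDegree_pderiv_le [CommSemiring R] (i : σ) (p : MvPolynomial σ R) :
    (pderiv i p).totalDegree ≤ p.totalDegree - 1 := by
  refine Finset.sup_le fun m hm => ?_
  have hcoeff : coeff (m + Finsupp.single i 1) p ≠ 0 := by
    rw [mem_support_iff, coeff_pderiv] at hm
    exact left_ne_zero_of_mul hm
  have h := le_totalDegree (mem_support_iff.mpr hcoeff)
  rw [Finsupp.sum_add_index' (fun _ => rfl) (fun _ _ _ => rfl), Finsupp.sum_single_index rfl] at h
  omega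

theorem MvPolynomial.eq_C_of_forall_pderiv_eq_zero [CommRing R] [IsDomain R] [CharZero R]
    {p : MvPolynomial σ R} (h : ∀ i, pderiv i p = 0) : p = C (coeff 0 p) := by
  classical
  ext m
  rw [coeff_C]
  split_ifs with hm
  · rw [hm]
  obtain ⟨i, hi⟩ : ∃ i, m i ≠ 0 := by simpa [Finsupp.ext_iff, eq_comm] using hm
  have hle : Finsupp.single i 1 ≤ m := Finsupp.single_le_iff.mpr (Nat.one_le_iff_ne_zero.mpr hi)
  have := congr(coeff (m - Finsupp.single i 1) $(h i))
  rw [coeff_pderiv, tsub_add_cancel_of_le hle, coeff_zero] at this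
  exact (mul_eq_zero.mp this).resolve_right (by norm_cast)

end PDeriv

noncomputable def mixedPD (a b : ℕ) (f : ℝ × ℝ → ℂ) : ℝ × ℝ → ℂ := (pd 0)^[a] ((pd 1)^[b] f)

section MixedPD

variable {f g : ℝ × ℝ → ℂ} {x : ℝ × ℝ} {a b : ℕ}

theorem Filter.EventuallyEq.mixedPD_eq (h : f =ᶠ[𝓝 x] g) (a b : ℕ) :
    mixedPD a b f x = mixedPD a b g x :=
  ((h.iterate_pd 1 b).iterate_pd 0 a).eq_of_nhds

theorem mixedPD_add (hf : ContDiffAt ℝ (a + b : ℕ) f x) (hg : ContDiffAt ℝ (a + b : ℕ) g x) :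
    mixedPD a b (f + g) x = mixedPD a b f x + mixedPD a b g x := by
  have hb := iterate_pd_add_eventuallyEq (hf.of_le (by norm_cast; omega))
    (hg.of_le (by norm_cast; omega)) 1 (n := b)
  rw [add_comm a b] at hf hg
  exact ((hb.iterate_pd 0 a).trans
    (iterate_pd_add_eventuallyEq (hf.iterate_pd 1) (hg.iterate_pd 1) 0)).eq_of_nhds

theorem mixedPD_const_smul (c : ℂ) (f : ℝ × ℝ → ℂ) (a b : ℕ) :
    mixedPD a b (c • f) = c • mixedPD a b f := by
  simp only [mixedPD, iterate_pd_const_smul]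

theorem mixedPD_sub (hf : ContDiffAt ℝ (a + b : ℕ) f x) (hg : ContDiffAt ℝ (a + b : ℕ) g x) :
    mixedPD a b (f - g) x = mixedPD a b f x - mixedPD a b g x := by
  rw [sub_eq_add_neg, ← neg_one_smul ℂ g,
    mixedPD_add (g := (-1 : ℂ) • g) hf (hg.const_smul (-1 : ℂ)), mixedPD_const_smul,
    Pi.smul_apply, neg_one_smul, ← sub_eq_add_neg]

end MixedPD

noncomputable def polyDerivAt (x₀ : ℝ × ℝ) (a b : ℕ) : ℙ →ₗ[ℂ] ℂ :=
  (aeval ![(x₀.1 : ℂ), (x₀.2 : ℂ)]).toLinearMap ∘ₗ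
    ((pderiv 0 : Derivation ℂ ℙ ℙ).toLinearMap ^ a * (pderiv 1 : Derivation ℂ ℙ ℙ).toLinearMap ^ b)

section PolyDerivAt

variable {x₀ : ℝ × ℝ} {a b : ℕ} {p : ℙ}

theorem mixedPD_pev_apply : mixedPD a b (pev p) x₀ = polyDerivAt x₀ a b p := by
  simp [mixedPD, iterate_pd_pev, polyDerivAt, pev, Module.End.pow_apply]

theorem polyDerivAt_pderiv_zero :
    polyDerivAt x₀ a b (pderiv 0 p) = polyDerivAt x₀ (a + 1) b p := by
  have h : Function.Commute (pderiv (1 : Fin 2) : ℙ → ℙ) (pderiv 0) := pderiv_pderiv_comm 1 0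
  simp [polyDerivAt, Module.End.pow_apply, h.iterate_left b p]

theorem polyDerivAt_pderiv_one :
    polyDerivAt x₀ a b (pderiv 1 p) = polyDerivAt x₀ a (b + 1) p := by
  simp [polyDerivAt, Module.End.pow_apply]

theorem eq_zero_of_polyDerivAt_eq_zero {d : ℕ} (hp : p.totalDegree ≤ d)
    (h : ∀ a b, a + b ≤ d → polyDerivAt x₀ a b p = 0) : p = 0 := by
  induction d generalizing p with
  | zero =>
    rw [totalDegree_eq_zero_iff_eq_C.mp (Nat.le_zero.mp hp)] at h ⊢
    simpa [polyDerivAt] using h 0 0 le_rfl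
  | succ d ih =>
    have hpd : ∀ i, pderiv i p = 0 := by
      intro i
      refine ih ((totalDegree_pderiv_le i p).trans (by omega)) fun a b hab => ?_
      fin_cases i
      · simpa [polyDerivAt_pderiv_zero] using h (a + 1) b (by omega)
      · simpa [polyDerivAt_pderiv_one] using h a (b + 1) (by omega)
    rw [eq_C_of_forall_pderiv_eq_zero hpd] at h ⊢
    simpa [polyDerivAt] using h 0 0 (by omega)

end PolyDerivAt

section ProductRule

variable {g : ℝ × ℝ → ℂ} {x₀ : ℝ × ℝ} {a b : ℕ}

theorem mixedPD_pd_mul_pev (hg : ContDiffAt ℝ (a + b + 1 : ℕ) g x₀) (p : ℙ) (i : Fin 2) :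
    mixedPD a b (pd i (g * pev p)) x₀
      = mixedPD a b (pd i g * pev p) x₀ + mixedPD a b (g * pev (pderiv i p)) x₀ := by
  rw [(pd_mul_pev_eventuallyEq hg p i).mixedPD_eq]
  exact mixedPD_add ((hg.pd i).mul (contDiff_pev p).contDiffAt)
    ((hg.of_le (by norm_cast; omega)).mul (contDiff_pev _).contDiffAt)

theorem mixedPD_mul_pev_eq_zero {p : ℙ} (hg : ContDiffAt ℝ (a + b : ℕ) g x₀) (hp : ∀ i j, i + j ≤ a + b → polyDerivAt x₀ i j p = 0) :
    mixedPD a b (g * pev p) x₀ = 0 := by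
  induction hn : a + b generalizing a b g p with
  | zero =>
    obtain ⟨rfl, rfl⟩ : a = 0 ∧ b = 0 := by omega
    have h : pev p x₀ = 0 := by rw [← hp 0 0 le_rfl, ← mixedPD_pev_apply]; rfl
    exact mul_eq_zero_of_right (g x₀) h
  | succ n ih =>
    rw [hn] at hg hp
    -- peel off the innermost derivative: `∂ᵧ` if `b > 0`, otherwise `∂ₓ`
    obtain ⟨a', b', i, hab, hF⟩ : ∃ a' b' i, a' + b' = n ∧
        ∀ F, mixedPD a b F x₀ = mixedPD a' b' (pd i F) x₀ := by
      rcases b with _ | b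
      · obtain ⟨a, rfl⟩ : ∃ a', a = a' + 1 := ⟨a - 1, by omega⟩
        exact ⟨a, 0, 0, by omega, fun F => rfl⟩
      · exact ⟨a, b, 1, by omega, fun F => rfl⟩
    rw [← hab] at hg
    rw [hF, mixedPD_pd_mul_pev hg, ih (hg.pd i) (fun k l hkl => hp k l (by omega)) hab,
      ih (hg.of_le (by norm_cast; omega)) (fun k l hkl => ?_) hab, add_zero]
    fin_cases i
    · simpa [polyDerivAt_pderiv_zero] using hp (k + 1) l (by omega)
    · simpa [polyDerivAt_pderiv_one] using hp k (l + 1) (by omega)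

end ProductRule

noncomputable def helmholtz (g : ℝ × ℝ → ℂ) (p : ℙ) : ℝ × ℝ → ℂ :=
  fun x => (pd 0 (pd 0 (pev p)) x + pd 1 (pd 1 (pev p)) x) + g x * pev p x

section Helmholtz

variable {g : ℝ × ℝ → ℂ} {x₀ : ℝ × ℝ}

theorem helmholtz_eq (g : ℝ × ℝ → ℂ) (p : ℙ) :
    helmholtz g p = pev (pderiv 0 (pderiv 0 p) + pderiv 1 (pderiv 1 p)) + g * pev p := by
  ext x; simp [helmholtz, pd_pev, pev_add]

theorem helmholtz_add (g : ℝ × ℝ → ℂ) (p q : ℙ) :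
    helmholtz g (p + q) = helmholtz g p + helmholtz g q := by
  simp only [helmholtz_eq, map_add, pev_add]; ring

theorem helmholtz_smul (g : ℝ × ℝ → ℂ) (c : ℂ) (p : ℙ) :
    helmholtz g (c • p) = c • helmholtz g p := by
  simp only [helmholtz_eq, Derivation.map_smul, ← smul_add, pev_smul, mul_smul_comm]

theorem ContDiffAt.helmholtz {n : ℕ} (hg : ContDiffAt ℝ n g x₀) (p : ℙ) :
    ContDiffAt ℝ n (_root_.helmholtz g p) x₀ := by
  rw [helmholtz_eq]
  exact (contDiff_pev _).contDiffAt.add (hg.mul (contDiff_pev p).contDiffAt)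

theorem mixedPD_helmholtz {a b : ℕ} (hg : ContDiffAt ℝ (a + b : ℕ) g x₀) {p : ℙ}
    (hp : ∀ i j, i + j ≤ a + b → polyDerivAt x₀ i j p = 0) :
    mixedPD a b (helmholtz g p) x₀ = polyDerivAt x₀ (a + 2) b p + polyDerivAt x₀ a (b + 2) p := by
  rw [helmholtz_eq, mixedPD_add (g := g * pev p) (contDiff_pev _).contDiffAt
      (hg.mul (contDiff_pev p).contDiffAt),
    mixedPD_mul_pev_eq_zero hg hp, mixedPD_pev_apply, map_add, polyDerivAt_pderiv_zero,
    polyDerivAt_pderiv_zero, polyDerivAt_pderiv_one, polyDerivAt_pderiv_one, add_zero]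

theorem polyDerivAt_eq_zero_of_mixedPD_helmholtz {d : ℕ} (hg : ContDiffAt ℝ (d - 2 : ℕ) g x₀)
    {p : ℙ} (hQ : ∀ a b, a + b ≤ d - 2 → mixedPD a b (helmholtz g p) x₀ = 0)
    (h₀ : ∀ n ≤ d, polyDerivAt x₀ 0 n p = 0) (h₁ : ∀ n < d, polyDerivAt x₀ 1 n p = 0) :
    ∀ a b, a + b ≤ d → polyDerivAt x₀ a b p = 0 := by
  -- induction on the total order `k`, then on the `x`-order: the equation of index `(a, b)`
  -- gives `∂^{a+2,b} p` from `∂^{a,b+2} p` and from derivatives of order `≤ a + b`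
  suffices ∀ k, ∀ a b, a + b = k → k ≤ d → polyDerivAt x₀ a b p = 0 from
    fun a b hab => this _ a b rfl hab
  intro k
  induction k using Nat.strong_induction_on with | _ k ihk =>
  intro a
  induction a using Nat.strong_induction_on with | _ a iha =>
  intro b hab hk
  match a, iha with
  | 0, _ => exact h₀ b (by omega)
  | 1, _ => exact h₁ b (by omega)
  | a + 2, iha =>
    have h := mixedPD_helmholtz (a := a) (b := b) (hg.of_le (by norm_cast; omega))
      fun i j hij => ihk (i + j) (by omega) i j rfl (by omega)
    rwa [hQ a b (by omega), iha a (by omega) (b + 2) (by omega) hk, add_zero, eq_comm] at h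

end Helmholtz

section LinearAlgebra

open Module

variable {K V W ι : Type*} [Field K] [AddCommGroup V] [Module K V] [AddCommGroup W] [Module K W]
  [FiniteDimensional K W] [Fintype ι] {Q : V →ₗ[K] W} {C : V →ₗ[K] ι → K}

theorem LinearMap.bijective_prod_of_injective (hinj : Function.Injective (Q.prod C))
    (hdim : finrank K W + Fintype.card ι ≤ finrank K V) : Function.Bijective (Q.prod C) := by
  have : FiniteDimensional K V := Module.Finite.of_injective _ hinj
  refine ⟨hinj, (LinearMap.injective_iff_surjective_of_finrank_eq_finrank ?_).mp hinj⟩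
  have := LinearMap.finrank_le_finrank_of_injective hinj
  simp only [finrank_prod, finrank_fintype_fun_eq_card] at this ⊢
  omega

theorem LinearMap.surjective_of_injective_prod (hinj : Function.Injective (Q.prod C))
    (hdim : finrank K W + Fintype.card ι ≤ finrank K V) : Function.Surjective Q := fun w =>
  let ⟨v, hv⟩ := (bijective_prod_of_injective hinj hdim).2 (w, 0)
  ⟨v, congr_arg Prod.fst hv⟩

theorem LinearMap.exists_linearIndependent_span_ker_of_injective_prod
    (hinj : Function.Injective (Q.prod C)) (hdim : finrank K W + Fintype.card ι ≤ finrank K V) :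
    ∃ b : ι → V, LinearIndependent K b ∧ (∀ i, Q (b i) = 0) ∧
      ∀ v, Q v = 0 → v ∈ Submodule.span K (Set.range b) := by
  let e := LinearEquiv.ofBijective _ (bijective_prod_of_injective hinj hdim)
  have he : ∀ v, e v = (Q v, C v) := fun _ => rfl
  refine ⟨fun i => e.symm (0, Pi.basisFun K ι i), ?_, fun i => ?_, fun v hv => ?_⟩
  · exact ((Pi.basisFun K ι).linearIndependent.map' (LinearMap.inr K W _)
      (LinearMap.ker_eq_bot.mpr LinearMap.inr_injective)).map' e.symm.toLinearMap e.symm.ker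
  · simpa [he] using congr_arg Prod.fst (e.apply_symm_apply (0, Pi.basisFun K ι i))
  · rw [Submodule.mem_span_range_iff_exists_fun]
    refine ⟨C v, e.injective ?_⟩
    simp only [map_sum, map_smul, LinearEquiv.apply_symm_apply]
    rw [he, hv]
    ext i
    · simp [Prod.fst_sum]
    · simpa [Prod.snd_sum] using congr_fun ((Pi.basisFun K ι).sum_repr (C v)) i

end LinearAlgebra

def triangle (n : ℕ) : Finset (ℕ × ℕ) :=
  (Finset.range (n + 1) ×ˢ Finset.range (n + 1)).filter fun q => q.1 + q.2 ≤ n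

theorem mem_triangle {n : ℕ} {q : ℕ × ℕ} : q ∈ triangle n ↔ q.1 + q.2 ≤ n := by
  simp only [triangle, Finset.mem_filter, Finset.mem_product, Finset.mem_range]
  omega

def cauchyIndex (d : ℕ) (i : Fin (2 * d + 1)) : ℕ × ℕ :=
  if (i : ℕ) ≤ d then (0, i) else (1, i - (d + 1))

theorem cauchyIndex_injective (d : ℕ) : Function.Injective (cauchyIndex d) := by
  intro i j h
  simp only [cauchyIndex] at h
  split_ifs at h <;> simp only [Prod.mk.injEq] at h <;> omega

theorem cauchyIndex_fst_le_one (d : ℕ) (i : Fin (2 * d + 1)) : (cauchyIndex d i).1 ≤ 1 := by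
  unfold cauchyIndex; split_ifs <;> simp

theorem cauchyIndex_fst_add_snd_le (d : ℕ) (i : Fin (2 * d + 1)) :
    (cauchyIndex d i).1 + (cauchyIndex d i).2 ≤ d := by
  unfold cauchyIndex; split_ifs <;> dsimp only <;> omega

noncomputable def truncHelmholtz {g : ℝ × ℝ → ℂ} {x₀ : ℝ × ℝ} {n : ℕ} (hg : ContDiffAt ℝ n g x₀) :
    ℙ →ₗ[ℂ] (triangle n → ℂ) where
  toFun p e := mixedPD e.1.1 e.1.2 (helmholtz g p) x₀
  map_add' p q := funext fun e => by
    have hg' : ContDiffAt ℝ (e.1.1 + e.1.2 : ℕ) g x₀ :=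
      hg.of_le (by exact_mod_cast mem_triangle.mp e.2)
    rw [helmholtz_add, mixedPD_add (hg'.helmholtz p) (hg'.helmholtz q), Pi.add_apply]
  map_smul' c p := funext fun e => by
    simp [helmholtz_smul, mixedPD_const_smul]

noncomputable def cauchyData (x₀ : ℝ × ℝ) (d : ℕ) : ℙ →ₗ[ℂ] (Fin (2 * d + 1) → ℂ) :=
  LinearMap.pi fun i => polyDerivAt x₀ (cauchyIndex d i).1 (cauchyIndex d i).2

section TruncHelmholtz

variable {g : ℝ × ℝ → ℂ} {x₀ : ℝ × ℝ}

theorem truncHelmholtz_eq_zero_iff {n : ℕ} (hg : ContDiffAt ℝ n g x₀) (p : ℙ) :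
    truncHelmholtz hg p = 0 ↔ taylorZero n (helmholtz g p) x₀ :=
  ⟨fun h a b hab => congr_fun h ⟨(a, b), mem_triangle.mpr hab⟩,
    fun h => funext fun e => h _ _ (mem_triangle.mp e.2)⟩

theorem taylorZero_helmholtz_sub {n : ℕ} (hg : ContDiffAt ℝ n g x₀) {p r : ℙ}
    (h : ∀ e : triangle n, truncHelmholtz hg p e = polyDerivAt x₀ e.1.1 e.1.2 r) :
    taylorZero n (helmholtz g p - pev r) x₀ := fun a b hab => by
  have hg' : ContDiffAt ℝ (a + b : ℕ) g x₀ := hg.of_le (by exact_mod_cast hab)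
  rw [← sub_eq_zero.mpr (h ⟨(a, b), mem_triangle.mpr hab⟩), ← mixedPD_pev_apply]
  exact mixedPD_sub (hg'.helmholtz p) (contDiff_pev r).contDiffAt

theorem injective_truncHelmholtz_prod_cauchyData {d : ℕ} (hg : ContDiffAt ℝ (d - 2 : ℕ) g x₀) :
    Function.Injective (((truncHelmholtz hg).domRestrict (restrictTotalDegree (Fin 2) ℂ d)).prod
      ((cauchyData x₀ d).domRestrict (restrictTotalDegree (Fin 2) ℂ d))) := by
  rw [← LinearMap.ker_eq_bot, LinearMap.ker_eq_bot']
  rintro ⟨p, hp⟩ h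
  simp only [LinearMap.domRestrict_apply, LinearMap.prod_apply, Function.prod, Prod.mk_eq_zero] at h
  refine Subtype.ext (eq_zero_of_polyDerivAt_eq_zero ((mem_restrictTotalDegree _ _ p).mp hp)
    (polyDerivAt_eq_zero_of_mixedPD_helmholtz hg ((truncHelmholtz_eq_zero_iff hg p).mp h.1)
      (fun n hn => ?_) (fun n hn => ?_)))
  · simpa [cauchyData, cauchyIndex, hn] using congr_fun h.2 ⟨n, by omega⟩
  · simpa [cauchyData, cauchyIndex, show ¬n + (d + 1) ≤ d by omega] using
      congr_fun h.2 ⟨n + (d + 1), by omega⟩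

end TruncHelmholtz

theorem finrank_add_card_le_finrank_restrictTotalDegree {d : ℕ} (hd : 2 ≤ d) :
    Module.finrank ℂ (triangle (d - 2) → ℂ) + Fintype.card (Fin (2 * d + 1))
      ≤ Module.finrank ℂ (restrictTotalDegree (Fin 2) ℂ d) := by
  let idx : triangle (d - 2) ⊕ Fin (2 * d + 1) → ℕ × ℕ :=
    Sum.elim (fun e => (e.1.1 + 2, e.1.2)) (cauchyIndex d)
  have hidx : Function.Injective idx := by
    refine Function.Injective.sumElim (fun e e' h => ?_) (cauchyIndex_injective d) fun e i h => ?_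
    · simp only [Prod.mk.injEq, add_left_inj] at h
      exact Subtype.ext (Prod.ext h.1 h.2)
    · have := cauchyIndex_fst_le_one d i
      rw [← h] at this
      omega
  let expo : ℕ × ℕ ≃ (Fin 2 →₀ ℕ) := (finTwoArrowEquiv ℕ).symm.trans Finsupp.equivFunOnFinite.symm
  have hsum : ∀ q, ((expo q).sum fun _ e => e) = q.1 + q.2 := fun q => by
    simp [expo, Finsupp.sum_fintype]
  have hmem : ∀ k, expo (idx k) ∈ {s : Fin 2 →₀ ℕ | (s.sum fun _ e => e) ≤ d} := by
    rintro (e | i)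
    · have := mem_triangle.mp e.2
      simp only [Set.mem_ofPred_eq, hsum, idx, Sum.elim_inl]
      omega
    · simpa only [Set.mem_ofPred_eq, hsum, idx, Sum.elim_inr] using cauchyIndex_fst_add_snd_le d i
  have hli := (basisRestrictSupport ℂ _).linearIndependent.comp
    (fun k => ⟨expo (idx k), hmem k⟩) fun k k' h => hidx (expo.injective (congr_arg Subtype.val h))
  have hcard := LinearIndependent.fintype_card_le_finrank (R := ℂ)
    (M := restrictTotalDegree (Fin 2) ℂ d) hli
  simpa [Fintype.card_sum, Module.finrank_fintype_fun_eq_card] using hcard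

section Main

variable {g : ℝ × ℝ → ℂ} {x₀ : ℝ × ℝ} {d : ℕ}

theorem exists_totalDegree_le_taylorZero_helmholtz_sub (hd : 2 ≤ d)
    (hg : ContDiffAt ℝ (d - 2 : ℕ) g x₀) (r : ℙ) :
    ∃ p : ℙ, p.totalDegree ≤ d ∧ taylorZero (d - 2) (helmholtz g p - pev r) x₀ := by
  obtain ⟨⟨p, hp⟩, hpr⟩ := LinearMap.surjective_of_injective_prod
    (injective_truncHelmholtz_prod_cauchyData hg) (finrank_add_card_le_finrank_restrictTotalDegree hd)
    fun e => polyDerivAt x₀ e.1.1 e.1.2 r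
  exact ⟨p, (mem_restrictTotalDegree _ _ p).mp hp, taylorZero_helmholtz_sub hg (congr_fun hpr)⟩

theorem exists_linearIndependent_span_taylorZero_helmholtz (hd : 2 ≤ d)
    (hg : ContDiffAt ℝ (d - 2 : ℕ) g x₀) :
    ∃ b : Fin (2 * d + 1) → ℙ, LinearIndependent ℂ b ∧
      (∀ i, (b i).totalDegree ≤ d ∧ taylorZero (d - 2) (helmholtz g (b i)) x₀) ∧
      ∀ p : ℙ, p.totalDegree ≤ d → taylorZero (d - 2) (helmholtz g p) x₀ →
        p ∈ Submodule.span ℂ (Set.range b) := by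
  set V := restrictTotalDegree (Fin 2) ℂ d
  obtain ⟨b, hli, hker, hspan⟩ := LinearMap.exists_linearIndependent_span_ker_of_injective_prod
    (injective_truncHelmholtz_prod_cauchyData hg) (finrank_add_card_le_finrank_restrictTotalDegree hd)
  refine ⟨V.subtype ∘ b, hli.map' V.subtype V.ker_subtype, fun i =>
    ⟨(mem_restrictTotalDegree _ _ _).mp (b i).2, (truncHelmholtz_eq_zero_iff hg _).mp (hker i)⟩,
    fun p hp hQ => ?_⟩
  have hmem := hspan ⟨p, (mem_restrictTotalDegree _ _ p).mpr hp⟩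
    ((truncHelmholtz_eq_zero_iff hg p).mpr hQ)
  rw [Set.range_comp, ← Submodule.map_span]
  exact Submodule.mem_map_of_mem hmem

end Main

theorem Nat.triangular_sub_triangular (d : ℕ) :
    (d + 1) * (d + 2) / 2 - (d - 1) * d / 2 = 2 * d + 1 := by
  have h : (d + 1) * (d + 2) = (d - 1) * d + 2 * (2 * d + 1) := by
    rcases d with _ | d
    · rfl
    · simp only [Nat.add_sub_cancel]; ring
  rw [h, Nat.add_mul_div_left _ _ two_pos]
  omega

theorem truncated_helmholtz_operator_surjective_general
    (x₀ : ℝ × ℝ) (d : ℕ) (hd : 2 ≤ d)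
    (ω : ℝ)
    (c : ℝ × ℝ → ℝ) (hc : ContDiffAt ℝ (d - 2) c x₀) (hc0 : c x₀ ≠ 0) :
    (∀ r : MvPolynomial (Fin 2) ℂ, r.totalDegree ≤ d - 2 →
      ∃ p : MvPolynomial (Fin 2) ℂ, p.totalDegree ≤ d ∧
        taylorZero (d - 2)
          (fun x => (pd 0 (pd 0 (pev p)) x + pd 1 (pd 1 (pev p)) x)
              + ((ω : ℂ) ^ 2 / (c x : ℂ) ^ 2) * pev p x - pev r x) x₀) ∧
    ((d + 1) * (d + 2) / 2 - (d - 1) * d / 2 = 2 * d + 1) ∧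
    (∃ b : Fin (2 * d + 1) → MvPolynomial (Fin 2) ℂ,
      LinearIndependent ℂ b ∧
      (∀ i, (b i).totalDegree ≤ d ∧
        taylorZero (d - 2)
          (fun x => (pd 0 (pd 0 (pev (b i))) x + pd 1 (pd 1 (pev (b i))) x)
              + ((ω : ℂ) ^ 2 / (c x : ℂ) ^ 2) * pev (b i) x) x₀) ∧
      (∀ p : MvPolynomial (Fin 2) ℂ, p.totalDegree ≤ d →
        taylorZero (d - 2)
          (fun x => (pd 0 (pd 0 (pev p)) x + pd 1 (pd 1 (pev p)) x)
              + ((ω : ℂ) ^ 2 / (c x : ℂ) ^ 2) * pev p x) x₀ →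
        p ∈ Submodule.span ℂ (Set.range b))) := by
  have hc' : ContDiffAt ℝ (d - 2 : ℕ) c x₀ := by exact_mod_cast hc
  have hg : ContDiffAt ℝ (d - 2 : ℕ) (fun x => (ω : ℂ) ^ 2 / (c x : ℂ) ^ 2) x₀ := by
    have h : ContDiffAt ℝ (d - 2 : ℕ) (fun x => ω ^ 2 / c x ^ 2) x₀ :=
      contDiffAt_const.div (hc'.pow 2) (pow_ne_zero 2 hc0)
    simpa [Function.comp_def] using Complex.ofRealCLM.contDiff.contDiffAt.comp x₀ h
  exact ⟨fun r _ => exists_totalDegree_le_taylorZero_helmholtz_sub hd hg r,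
    Nat.triangular_sub_triangular d, exists_linearIndependent_span_taylorZero_helmholtz hd hg⟩

/-- The map `Q : ℙ^d → ℙ^{d-2}`, `Q(p) = 𝒯_{d-2}(Δp + (ω²/c²) p)`, is
surjective (for every `r ∈ ℙ^{d-2}` there is `p ∈ ℙ^d` with `𝒯_{d-2}(Δp + (ω²/c²)p - r) = 0`),
and its kernel has dimension `(d+1)(d+2)/2 - (d-1)d/2 = 2d+1`: it admits a linearly
independent spanning family of cardinality `2d+1`. -/
theorem truncated_helmholtz_operator_surjective
    (x₀ : ℝ × ℝ) (d : ℕ) (hd : 2 ≤ d)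
    (ω ρ : ℝ) (hρ : 0 < ρ)
    (c : ℝ × ℝ → ℝ) (hc : ContDiffAt ℝ (d - 2) c x₀) (hc0 : c x₀ ≠ 0) :
    (∀ r : MvPolynomial (Fin 2) ℂ, r.totalDegree ≤ d - 2 →
      ∃ p : MvPolynomial (Fin 2) ℂ, p.totalDegree ≤ d ∧
        taylorZero (d - 2)
          (fun x => (pd 0 (pd 0 (pev p)) x + pd 1 (pd 1 (pev p)) x)
              + ((ω : ℂ) ^ 2 / (c x : ℂ) ^ 2) * pev p x - pev r x) x₀) ∧
    ((d + 1) * (d + 2) / 2 - (d - 1) * d / 2 = 2 * d + 1) ∧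
    (∃ b : Fin (2 * d + 1) → MvPolynomial (Fin 2) ℂ,
      LinearIndependent ℂ b ∧
      (∀ i, (b i).totalDegree ≤ d ∧
        taylorZero (d - 2)
          (fun x => (pd 0 (pd 0 (pev (b i))) x + pd 1 (pd 1 (pev (b i))) x)
              + ((ω : ℂ) ^ 2 / (c x : ℂ) ^ 2) * pev (b i) x) x₀) ∧
      (∀ p : MvPolynomial (Fin 2) ℂ, p.totalDegree ≤ d →
        taylorZero (d - 2)
          (fun x => (pd 0 (pd 0 (pev p)) x + pd 1 (pd 1 (pev p)) x)
              + ((ω : ℂ) ^ 2 / (c x : ℂ) ^ 2) * pev p x) x₀ →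
        p ∈ Submodule.span ℂ (Set.range b))) :=
  truncated_helmholtz_operator_surjective_general x₀ d hd ω c hc hc0
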